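/- arXiv:2402.17235 — 2 statements merged into one kernel-verified Lean document; each statement's English description precedes it below -/
import Mathlib

section
/- Gradient norm control along the update segment: let θ ∈ ℝ^K, a₀ ∈ {1,…,K}, x ∈ [−R_max, R_max], and η ∈ (0, 2/(9·R_max)). Set θ' = θ + η·g(θ, a₀, x). Then for every ζ ∈ [0, 1], writing θ_ζ = θ + ζ·(θ' − θ), one has ‖∇(θ_ζ)‖₂ ≤ (1 / (1 − (9/2)·R_max·η)) · ‖∇(θ)‖₂. -/
open MeasureTheory Finset Real

/-- Softmax policy. -/
noncomputable def softmax {K : ℕ} (θ : Fin K → ℝ) (a : Fin K) : ℝ :=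
  Real.exp (θ a) / ∑ a' : Fin K, Real.exp (θ a')

/-- Expected reward `π_θ^⊤ r`. -/
noncomputable def value {K : ℕ} (r θ : Fin K → ℝ) : ℝ :=
  ∑ a : Fin K, softmax θ a * r a

/-- True gradient of `θ ↦ π_θ^⊤ r`. -/
noncomputable def pgrad {K : ℕ} (r θ : Fin K → ℝ) (a : Fin K) : ℝ :=
  softmax θ a * (r a - value r θ)

/-- Stochastic gradient. -/
noncomputable def sgrad {K : ℕ} (θ : Fin K → ℝ) (a₀ : Fin K) (x : ℝ) (a : Fin K) : ℝ :=
  ((if a = a₀ then (1 : ℝ) else 0) - softmax θ a) * x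

/-- Euclidean norm on `ℝ^K`. -/
noncomputable def norm2 {K : ℕ} (v : Fin K → ℝ) : ℝ :=
  Real.sqrt (∑ a : Fin K, (v a) ^ 2)

/-!
Along the line `s ↦ θ + s • u` the gradient satisfies `d/ds ∇ = (u - π^⊤u) ⊙ ∇ - ⟨∇, u⟩ π`,
because the softmax Jacobian applied to `u` is `π ⊙ (u - π^⊤u)`. The two terms have norms at most
`2‖u‖‖∇‖` and `‖u‖‖∇‖`, so Grönwall gives `‖∇(θ + ζ u)‖ ≤ exp (3‖u‖ζ) ‖∇(θ)‖`. For `u = η g`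
one has `‖g‖ ≤ √2 |x| ≤ (3/2) R_max`, so the exponent is at most `s = (9/2) R_max η < 1`, and
`exp s ≤ 1 / (1 - s)`.
-/

open WithLp (toLp)

section Softmax

variable {K : ℕ}

lemma sum_exp_pos [NeZero K] (θ : Fin K → ℝ) : 0 < ∑ a, exp (θ a) :=
  sum_pos (fun a _ => exp_pos (θ a)) univ_nonempty

lemma softmax_nonneg (θ : Fin K → ℝ) (a : Fin K) : 0 ≤ softmax θ a :=
  div_nonneg (exp_pos _).le (sum_nonneg fun b _ => (exp_pos (θ b)).le)

lemma softmax_le_one (θ : Fin K → ℝ) (a : Fin K) : softmax θ a ≤ 1 :=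
  div_le_one_of_le₀ (single_le_sum (f := fun b => exp (θ b)) (fun _ _ => (exp_pos _).le)
    (mem_univ a)) (sum_nonneg fun b _ => (exp_pos (θ b)).le)

lemma sum_softmax [NeZero K] (θ : Fin K → ℝ) : ∑ a, softmax θ a = 1 := by
  simp only [softmax, ← sum_div, div_self (sum_exp_pos θ).ne']

lemma norm_toLp_softmax_le_one [NeZero K] (θ : Fin K → ℝ) : ‖toLp 2 (softmax θ)‖ ≤ 1 := by
  rw [← sq_le_one_iff₀ (norm_nonneg _), EuclideanSpace.real_norm_sq_eq, ← sum_softmax θ]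
  refine sum_le_sum fun a _ => ?_
  nlinarith [softmax_nonneg θ a, softmax_le_one θ a]

lemma abs_value_le [NeZero K] (u θ : Fin K → ℝ) : |value u θ| ≤ ‖toLp 2 u‖ :=
  calc |value u θ| ≤ ∑ a, softmax θ a * |u a| := by
        simpa only [value, abs_mul, abs_of_nonneg (softmax_nonneg θ _)] using
          abs_sum_le_sum_abs (fun a => softmax θ a * u a) univ
    _ ≤ ∑ a, softmax θ a * ‖toLp 2 u‖ :=
        sum_le_sum fun a _ => mul_le_mul_of_nonneg_left
          (by simpa using PiLp.norm_apply_le (toLp 2 u) a) (softmax_nonneg θ a)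
    _ = ‖toLp 2 u‖ := by rw [← sum_mul, sum_softmax, one_mul]

end Softmax

section LineDerivative

variable {K : ℕ}

lemma sum_pgrad_mul_comm (r u θ : Fin K → ℝ) :
    ∑ a, pgrad u θ a * r a = ∑ a, pgrad r θ a * u a := by
  -- both sides are the covariance of `r` and `u` under `π_θ`
  have expand : ∀ v w : Fin K → ℝ,
      ∑ a, pgrad v θ a * w a = ∑ a, softmax θ a * v a * w a - value v θ * value w θ := by
    intro v w
    have hterm : ∀ a,
        pgrad v θ a * w a = softmax θ a * v a * w a - value v θ * (softmax θ a * w a) := fun a => by rw [pgrad]; ring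
    simp only [hterm, sum_sub_distrib, ← mul_sum, value]
  rw [expand, expand, mul_comm (value r θ)]
  congr 1
  exact sum_congr rfl fun a _ => by ring

noncomputable def pgradDeriv (r θ u : Fin K → ℝ) (a : Fin K) : ℝ :=
  (u a - value u θ) * pgrad r θ a - softmax θ a * ∑ b, pgrad r θ b * u b

variable [NeZero K] (r θ u : Fin K → ℝ) (t : ℝ)

lemma hasDerivAt_softmax_line (a : Fin K) :
    HasDerivAt (fun s : ℝ => softmax (θ + s • u) a) (pgrad u (θ + t • u) a) t := by
  have hexp : ∀ b, HasDerivAt (fun s : ℝ => exp ((θ + s • u) b))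
      (exp ((θ + t • u) b) * u b) t := fun b => by
    simpa using (((hasDerivAt_id t).mul_const (u b)).const_add (θ b)).exp
  refine ((hexp a).fun_div (HasDerivAt.fun_sum fun b _ => hexp b)
    (sum_exp_pos _).ne').congr_deriv ?_
  have hS := (sum_exp_pos (θ + t • u)).ne'
  simp only [pgrad, value, softmax, div_mul_eq_mul_div, ← sum_div]
  field_simp

lemma hasDerivAt_value_line :
    HasDerivAt (fun s : ℝ => value r (θ + s • u)) (∑ b, pgrad r (θ + t • u) b * u b) t := by
  rw [← sum_pgrad_mul_comm]
  exact HasDerivAt.fun_sum fun b _ => (hasDerivAt_softmax_line θ u t b).mul_const (r b)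

lemma hasDerivAt_pgrad_line (a : Fin K) :
    HasDerivAt (fun s : ℝ => pgrad r (θ + s • u) a) (pgradDeriv r (θ + t • u) u a) t := by
  refine ((hasDerivAt_softmax_line θ u t a).fun_mul
    ((hasDerivAt_const t (r a)).fun_sub (hasDerivAt_value_line r θ u t))).congr_deriv ?_
  simp only [pgradDeriv, pgrad]
  ring

lemma hasDerivAt_toLp_pgrad_line :
    HasDerivAt (fun s : ℝ => toLp 2 (pgrad r (θ + s • u)))
      (toLp 2 (pgradDeriv r (θ + t • u) u)) t :=
  (PiLp.continuousLinearEquiv 2 ℝ (fun _ : Fin K => ℝ)).symm.hasFDerivAt.comp_hasDerivAt t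
    (hasDerivAt_pi.mpr fun a => hasDerivAt_pgrad_line r θ u t a)

end LineDerivative

lemma norm_toLp_mul_le {ι : Type*} [Fintype ι] (c v : ι → ℝ) {M : ℝ} (hM : 0 ≤ M)
    (hc : ∀ i, |c i| ≤ M) : ‖toLp 2 (fun i => c i * v i)‖ ≤ M * ‖toLp 2 v‖ := by
  rw [← sq_le_sq₀ (norm_nonneg _) (by positivity), mul_pow, EuclideanSpace.real_norm_sq_eq,
    EuclideanSpace.real_norm_sq_eq, mul_sum]
  refine sum_le_sum fun i _ => ?_
  rw [PiLp.toLp_apply, PiLp.toLp_apply, mul_pow, ← sq_abs (c i)]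
  exact mul_le_mul_of_nonneg_right (pow_le_pow_left₀ (abs_nonneg _) (hc i) 2) (sq_nonneg _)

section NormBounds

variable {K : ℕ} [NeZero K]

lemma norm_pgradDeriv_le (r θ u : Fin K → ℝ) :
    ‖toLp 2 (pgradDeriv r θ u)‖ ≤ 3 * ‖toLp 2 u‖ * ‖toLp 2 (pgrad r θ)‖ := by
  set U := ‖toLp 2 u‖
  set G := ‖toLp 2 (pgrad r θ)‖
  set D := ∑ b, pgrad r θ b * u b
  have hsplit : toLp 2 (pgradDeriv r θ u)
      = toLp 2 (fun a => (u a - value u θ) * pgrad r θ a) - D • toLp 2 (softmax θ) := by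
    ext a
    simp only [pgradDeriv, PiLp.sub_apply, PiLp.smul_apply, smul_eq_mul]
    ring
  have hcoeff : ∀ a, |u a - value u θ| ≤ 2 * U := fun a =>
    calc |u a - value u θ| ≤ |u a| + |value u θ| := abs_sub _ _
      _ ≤ U + U := add_le_add (by simpa using PiLp.norm_apply_le (toLp 2 u) a) (abs_value_le u θ)
      _ = 2 * U := by ring
  have hD : |D| ≤ G * U := by
    simpa [D, PiLp.inner_apply, mul_comm] using abs_real_inner_le_norm (toLp 2 (pgrad r θ)) (toLp 2 u)
  calc ‖toLp 2 (pgradDeriv r θ u)‖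
      ≤ ‖toLp 2 (fun a => (u a - value u θ) * pgrad r θ a)‖ + ‖D • toLp 2 (softmax θ)‖ := by
        rw [hsplit]; exact norm_sub_le _ _
    _ ≤ 2 * U * G + G * U * 1 := by
        rw [norm_smul, Real.norm_eq_abs]
        gcongr
        · exact norm_toLp_mul_le _ _ (by positivity) hcoeff
        · exact norm_toLp_softmax_le_one θ
    _ = 3 * U * G := by ring

lemma norm_sgrad_le (θ : Fin K → ℝ) (a₀ : Fin K) (x : ℝ) :
    ‖toLp 2 (sgrad θ a₀ x)‖ ≤ √2 * |x| := by
  rw [← sq_le_sq₀ (norm_nonneg _) (by positivity), mul_pow, sq_sqrt zero_le_two, sq_abs,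
    EuclideanSpace.real_norm_sq_eq]
  have hterm : ∀ a, ((if a = a₀ then (1 : ℝ) else 0) - softmax θ a) ^ 2
      ≤ (if a = a₀ then (1 : ℝ) else 0) + softmax θ a := fun a => by
    have := softmax_nonneg θ a
    have := softmax_le_one θ a
    split_ifs <;> nlinarith
  calc ∑ a, sgrad θ a₀ x a ^ 2
      = (∑ a, ((if a = a₀ then (1 : ℝ) else 0) - softmax θ a) ^ 2) * x ^ 2 := by
        simp only [sgrad, mul_pow, sum_mul]
    _ ≤ (∑ a, ((if a = a₀ then (1 : ℝ) else 0) + softmax θ a)) * x ^ 2 := by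
        gcongr with a; exact hterm a
    _ = 2 * x ^ 2 := by
        rw [sum_add_distrib, sum_ite_eq', if_pos (mem_univ a₀), sum_softmax]; norm_num

lemma norm_pgrad_line_le (r θ u : Fin K → ℝ) {ζ : ℝ} (hζ : 0 ≤ ζ) :
    ‖toLp 2 (pgrad r (θ + ζ • u))‖ ≤ exp (3 * ‖toLp 2 u‖ * ζ) * ‖toLp 2 (pgrad r θ)‖ := by
  have hderiv := hasDerivAt_toLp_pgrad_line r θ u
  have := norm_le_gronwallBound_of_norm_deriv_right_le (a := 0) (b := ζ) (ε := 0)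
    (δ := ‖toLp 2 (pgrad r θ)‖)
    (fun s _ => (hderiv s).continuousAt.continuousWithinAt) (fun s _ => (hderiv s).hasDerivWithinAt)
    (by simp) (fun s _ => by simpa using norm_pgradDeriv_le r (θ + s • u) u) ζ ⟨hζ, le_rfl⟩
  rwa [gronwallBound_ε0, sub_zero, mul_comm] at this

end NormBounds

lemma norm2_eq_norm_toLp {K : ℕ} (v : Fin K → ℝ) : norm2 v = ‖toLp 2 v‖ := by
  simp [norm2, EuclideanSpace.norm_eq]

theorem grad_norm_control_on_segment_general
    (K : ℕ) (hK : 2 ≤ K) (Rmax : ℝ) (hRmax : 0 < Rmax)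
    (r : Fin K → ℝ)
    (θ : Fin K → ℝ) (a₀ : Fin K) (x : ℝ) (hx : x ∈ Set.Icc (-Rmax) Rmax)
    (η : ℝ) (hη : 0 < η) (hη' : η < 2 / (9 * Rmax))
    (θ' : Fin K → ℝ) (hθ' : θ' = fun a => θ a + η * sgrad θ a₀ x a)
    (ζ : ℝ) (hζ : ζ ∈ Set.Icc (0 : ℝ) 1) :
    norm2 (pgrad r (fun a => θ a + ζ * (θ' a - θ a)))
      ≤ (1 / (1 - (9 / 2) * Rmax * η)) * norm2 (pgrad r θ) := by
  have : NeZero K := ⟨by omega⟩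
  set u := η • sgrad θ a₀ x
  have hsegment : (fun a => θ a + ζ * (θ' a - θ a)) = θ + ζ • u := by
    ext a; simp [hθ', u]
  have hstep : 3 * ‖toLp 2 u‖ ≤ 9 / 2 * Rmax * η := by
    have hsqrt2 : √2 ≤ 3 / 2 := by rw [sqrt_le_left (by norm_num)]; norm_num
    have hsgrad : ‖toLp 2 (sgrad θ a₀ x)‖ ≤ 3 / 2 * Rmax :=
      (norm_sgrad_le θ a₀ x).trans (mul_le_mul hsqrt2 (abs_le.mpr hx) (abs_nonneg x) (by norm_num))
    rw [WithLp.toLp_smul, norm_smul, norm_of_nonneg hη.le]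
    nlinarith
  have hs : 9 / 2 * Rmax * η < 1 := by
    rw [lt_div_iff₀ (by positivity)] at hη'
    linarith
  rw [norm2_eq_norm_toLp, norm2_eq_norm_toLp, hsegment]
  calc ‖toLp 2 (pgrad r (θ + ζ • u))‖
      ≤ exp (3 * ‖toLp 2 u‖ * ζ) * ‖toLp 2 (pgrad r θ)‖ := norm_pgrad_line_le r θ u hζ.1
    _ ≤ exp (9 / 2 * Rmax * η) * ‖toLp 2 (pgrad r θ)‖ := by
        refine mul_le_mul_of_nonneg_right (exp_le_exp.2 ?_) (norm_nonneg _)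
        calc 3 * ‖toLp 2 u‖ * ζ ≤ 3 * ‖toLp 2 u‖ * 1 := mul_le_mul_of_nonneg_left hζ.2 (by positivity)
          _ ≤ 9 / 2 * Rmax * η := by linarith
    _ ≤ 1 / (1 - 9 / 2 * Rmax * η) * ‖toLp 2 (pgrad r θ)‖ := by
        gcongr
        exact exp_bound_div_one_sub_of_interval (by positivity) hs

/-- Gradient norm control along the update segment from `θ` to `θ' = θ + η·g(θ,a₀,x)`. -/
theorem grad_norm_control_on_segment
    (K : ℕ) (hK : 2 ≤ K) (Rmax : ℝ) (hRmax : 0 < Rmax)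
    (r : Fin K → ℝ) (hr : ∀ a, r a ∈ Set.Icc (-Rmax) Rmax)
    (θ : Fin K → ℝ) (a₀ : Fin K) (x : ℝ) (hx : x ∈ Set.Icc (-Rmax) Rmax)
    (η : ℝ) (hη : 0 < η) (hη' : η < 2 / (9 * Rmax))
    (θ' : Fin K → ℝ) (hθ' : θ' = fun a => θ a + η * sgrad θ a₀ x a)
    (ζ : ℝ) (hζ : ζ ∈ Set.Icc (0 : ℝ) 1) :
    norm2 (pgrad r (fun a => θ a + ζ * (θ' a - θ a)))
      ≤ (1 / (1 - (9 / 2) * Rmax * η)) * norm2 (pgrad r θ) :=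
  grad_norm_control_on_segment_general K hK Rmax hRmax r θ a₀ x hx η hη hη' θ' hθ' ζ hζ
end

section
/- Non-uniform Łojasiewicz inequality: suppose r ∈ ℝ^K has a unique maximizing action a*, and let π* ∈ ℝ^K be the one-hot vector at a* (the maximizer of π ↦ π^⊤r over the probability simplex). Then for all θ ∈ ℝ^K, ‖∇(θ)‖₂ ≥ π_θ(a*) · (π* − π_θ)^⊤ r = π_θ(a*) · (r(a*) − π_θ^⊤r). -/
open MeasureTheory Finset Real

/-!
The gradient coordinate at `a*` is exactly `π_θ(a*) · (r(a*) − π_θ^⊤r)`, and a single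
coordinate of a vector is bounded by its Euclidean norm.
-/

theorem sum_ite_eq_sub_mul {ι R : Type*} [Fintype ι] [DecidableEq ι] [CommRing R]
    (i : ι) (p r : ι → R) :
    ∑ a, ((if a = i then 1 else 0) - p a) * r a = r i - ∑ a, p a * r a := by
  simp only [sub_mul, Finset.sum_sub_distrib, ite_mul, one_mul, zero_mul,
    Finset.sum_ite_eq', Finset.mem_univ, if_true]

theorem abs_apply_le_norm2 {K : ℕ} (v : Fin K → ℝ) (a : Fin K) : |v a| ≤ norm2 v :=
  Real.abs_le_sqrt <|
    Finset.single_le_sum (f := fun b => v b ^ 2) (fun b _ => sq_nonneg (v b)) (Finset.mem_univ a)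

theorem nonuniform_lojasiewicz_general
    (K : ℕ) (r : Fin K → ℝ)
    (astar : Fin K)
    (pistar : Fin K → ℝ) (hpistar : pistar = fun a => if a = astar then 1 else 0)
    (θ : Fin K → ℝ) :
    softmax θ astar * ∑ a : Fin K, (pistar a - softmax θ a) * r a ≤ norm2 (pgrad r θ)
      ∧ softmax θ astar * ∑ a : Fin K, (pistar a - softmax θ a) * r a
        = softmax θ astar * (r astar - value r θ) := by
  have hgap : ∑ a : Fin K, (pistar a - softmax θ a) * r a = r astar - value r θ := by
    subst hpistar
    exact sum_ite_eq_sub_mul astar (softmax θ) r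
  rw [hgap]
  exact ⟨(le_abs_self (pgrad r θ astar)).trans (abs_apply_le_norm2 _ astar), rfl⟩

/-- Non-uniform Łojasiewicz inequality: if `a*` is the unique maximizing action of `r` and
`π*` is the one-hot vector at `a*`, then
`‖∇(θ)‖₂ ≥ π_θ(a*)·(π* − π_θ)^⊤r = π_θ(a*)·(r(a*) − π_θ^⊤r)`. -/
theorem nonuniform_lojasiewicz
    (K : ℕ) (hK : 2 ≤ K) (r : Fin K → ℝ)
    (astar : Fin K) (hstar : ∀ a, a ≠ astar → r a < r astar)
    (pistar : Fin K → ℝ) (hpistar : pistar = fun a => if a = astar then 1 else 0)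
    (θ : Fin K → ℝ) :
    softmax θ astar * ∑ a : Fin K, (pistar a - softmax θ a) * r a ≤ norm2 (pgrad r θ)
      ∧ softmax θ astar * ∑ a : Fin K, (pistar a - softmax θ a) * r a
        = softmax θ astar * (r astar - value r θ) :=
  nonuniform_lojasiewicz_general K r astar pistar hpistar θ
end
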